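/- Let X be a real vector space of dimension at least 2 endowed with two norms ‖·‖₁ and ‖·‖₂, with associated functionals ρ*,₁ and ρ*,₂. The following conditions are equivalent: (i) the norms ‖·‖₁ and ‖·‖₂ are equivalent (i.e., there are constants 0 < m ≤ M with m‖x‖₁ ≤ ‖x‖₂ ≤ M‖x‖₁ for all x); (ii) there exists a positive constant α such that |ρ*,₁(x,y) − ρ*,₂(x,y)| ≤ α·min{‖x‖₁²·‖y‖₁², ‖x‖₂²·‖y‖₂²} for all x,y ∈ X. -/

import Mathlib

open Filter Topology

/-- `N : X → ℝ` is a norm on the real vector space `X`. -/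
def IsNorm {X : Type*} [AddCommGroup X] [Module ℝ X] (N : X → ℝ) : Prop :=
  (∀ x : X, N x = 0 ↔ x = 0) ∧
  (∀ (t : ℝ) (x : X), N (t • x) = |t| * N x) ∧
  (∀ x y : X, N (x + y) ≤ N x + N y)

/-- The norm derivative `ρ₊` computed with respect to the norm `N`. -/
noncomputable def rhoPlusN {X : Type*} [AddCommGroup X] [Module ℝ X] (N : X → ℝ)
    (x y : X) : ℝ :=
  limUnder (𝓝[>] (0 : ℝ)) (fun t : ℝ => (N (x + t • y) ^ 2 - N x ^ 2) / (2 * t))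

/-- The norm derivative `ρ₋` computed with respect to the norm `N`. -/
noncomputable def rhoMinusN {X : Type*} [AddCommGroup X] [Module ℝ X] (N : X → ℝ)
    (x y : X) : ℝ :=
  limUnder (𝓝[<] (0 : ℝ)) (fun t : ℝ => (N (x + t • y) ^ 2 - N x ^ 2) / (2 * t))

/-- `ρ*` computed with respect to the norm `N`. -/
noncomputable def rhoStarN {X : Type*} [AddCommGroup X] [Module ℝ X] (N : X → ℝ)
    (x y : X) : ℝ :=
  rhoMinusN N x y * rhoPlusN N x y

/-! For a norm `N`, the function `t ↦ N (x + t • y) ^ 2` is convex, so the one-sided limits defining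
`ρ₊` and `ρ₋` exist (they are half its one-sided derivatives at `0`); the triangle inequality bounds
the difference quotients by `N x * N y + O(t)`, whence `|ρ*(x, y)| ≤ N x ^ 2 * N y ^ 2`. If the norms
are equivalent, each of the two bounds is a constant multiple of the other, which gives the estimate
by the minimum. Conversely `ρ*(x, x) = N x ^ 4`, so taking `y = x` compares `N₁ x ^ 4` with `N₂ x ^ 4`. -/

open Set

noncomputable def normSqDiffQuot {X : Type*} [AddCommGroup X] [Module ℝ X] (N : X → ℝ)
    (x y : X) (t : ℝ) : ℝ :=
  (N (x + t • y) ^ 2 - N x ^ 2) / (2 * t)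

lemma normSqDiffQuot_eq_slope {X : Type*} [AddCommGroup X] [Module ℝ X] (N : X → ℝ)
    (x y : X) (t : ℝ) :
    normSqDiffQuot N x y t = slope (fun s : ℝ => N (x + s • y) ^ 2) 0 t / 2 := by
  rw [normSqDiffQuot, slope_def_field, zero_smul, add_zero, sub_zero, mul_comm, div_div]

namespace IsNorm

variable {X : Type*} [AddCommGroup X] [Module ℝ X] {N : X → ℝ}

lemma map_zero (h : IsNorm N) : N 0 = 0 := (h.1 0).2 rfl

lemma map_neg (h : IsNorm N) (x : X) : N (-x) = N x := by
  simpa using h.2.1 (-1) x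

lemma nonneg (h : IsNorm N) (x : X) : 0 ≤ N x := by
  have htri := h.2.2 x (-x)
  rw [add_neg_cancel, h.map_zero, h.map_neg] at htri
  linarith

lemma abs_sub_le (h : IsNorm N) (x y : X) : |N x - N y| ≤ N (x - y) := by
  have hx := h.2.2 (x - y) y
  have hy := h.2.2 (y - x) x
  rw [sub_add_cancel] at hx
  rw [sub_add_cancel, ← neg_sub, h.map_neg] at hy
  exact abs_sub_le_iff.mpr ⟨by linarith, by linarith⟩

lemma convexOn (h : IsNorm N) : ConvexOn ℝ univ N :=
  ⟨convex_univ, fun a _ b _ p q hp hq _ => by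
    simpa only [smul_eq_mul, h.2.1, abs_of_nonneg hp, abs_of_nonneg hq] using h.2.2 (p • a) (q • b)⟩

lemma convexOn_sq_line (h : IsNorm N) (x y : X) :
    ConvexOn ℝ univ (fun t : ℝ => N (x + t • y) ^ 2) := by
  have hline : ConvexOn ℝ univ (fun t : ℝ => N (x + t • y)) := by
    simpa [Function.comp_def, AffineMap.lineMap_apply_module', add_comm]
      using h.convexOn.comp_affineMap (AffineMap.lineMap x (x + y))
  exact hline.pow (fun t _ => h.nonneg _) 2

lemma tendsto_rhoPlusN (h : IsNorm N) (x y : X) :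
    Tendsto (normSqDiffQuot N x y) (𝓝[>] 0) (𝓝 (rhoPlusN N x y)) := by
  have hderiv := (h.convexOn_sq_line x y).hasDerivWithinAt_rightDeriv_of_mem_interior
    (by simp : (0 : ℝ) ∈ interior univ)
  have hslope := ((hasDerivWithinAt_iff_tendsto_slope' (by simp)).mp hderiv).div_const 2
  simp only [← normSqDiffQuot_eq_slope] at hslope
  exact tendsto_nhds_limUnder ⟨_, hslope⟩

lemma tendsto_rhoMinusN (h : IsNorm N) (x y : X) :
    Tendsto (normSqDiffQuot N x y) (𝓝[<] 0) (𝓝 (rhoMinusN N x y)) := by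
  have hderiv := (h.convexOn_sq_line x y).hasDerivWithinAt_leftDeriv_of_mem_interior
    (by simp : (0 : ℝ) ∈ interior univ)
  have hslope := ((hasDerivWithinAt_iff_tendsto_slope' (by simp)).mp hderiv).div_const 2
  simp only [← normSqDiffQuot_eq_slope] at hslope
  exact tendsto_nhds_limUnder ⟨_, hslope⟩

lemma abs_normSqDiffQuot_le (h : IsNorm N) (x y : X) {t : ℝ} (ht : t ≠ 0) :
    |normSqDiffQuot N x y t| ≤ N y * (N x + |t| * N y / 2) := by
  have hdiff : |N (x + t • y) - N x| ≤ |t| * N y := by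
    simpa [h.2.1] using h.abs_sub_le (x + t • y) x
  have hsum : N (x + t • y) + N x ≤ 2 * N x + |t| * N y := by
    have := h.2.2 x (t • y)
    rw [h.2.1] at this
    linarith
  have hnum : |N (x + t • y) ^ 2 - N x ^ 2| ≤ |t| * N y * (2 * N x + |t| * N y) := by
    rw [sq_sub_sq, abs_mul, abs_of_nonneg (add_nonneg (h.nonneg _) (h.nonneg _)), mul_comm]
    exact mul_le_mul hdiff hsum (add_nonneg (h.nonneg _) (h.nonneg _))
      (mul_nonneg (abs_nonneg t) (h.nonneg y))
  rw [normSqDiffQuot, abs_div, abs_mul, abs_two, div_le_iff₀ (by positivity)]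
  linarith

lemma abs_le_of_tendsto_normSqDiffQuot (h : IsNorm N) (x y : X) {l : Filter ℝ} [l.NeBot]
    (hl : l ≤ 𝓝[≠] 0) {r : ℝ} (hr : Tendsto (normSqDiffQuot N x y) l (𝓝 r)) :
    |r| ≤ N x * N y := by
  have hbound : Tendsto (fun t : ℝ => N y * (N x + |t| * N y / 2)) l (𝓝 (N x * N y)) := by
    have hcont : Continuous fun t : ℝ => N y * (N x + |t| * N y / 2) := by fun_prop
    simpa [mul_comm] using (hcont.tendsto 0).mono_left (hl.trans nhdsWithin_le_nhds)
  refine le_of_tendsto_of_tendsto hr.abs hbound ?_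
  filter_upwards [hl self_mem_nhdsWithin] with t ht
  exact h.abs_normSqDiffQuot_le x y ht

lemma abs_rhoStarN_le (h : IsNorm N) (x y : X) :
    |rhoStarN N x y| ≤ N x ^ 2 * N y ^ 2 := by
  have hminus := h.abs_le_of_tendsto_normSqDiffQuot x y
    (nhdsLT_le_nhdsNE 0) (h.tendsto_rhoMinusN x y)
  have hplus := h.abs_le_of_tendsto_normSqDiffQuot x y
    (nhdsGT_le_nhdsNE 0) (h.tendsto_rhoPlusN x y)
  calc |rhoStarN N x y| = |rhoMinusN N x y| * |rhoPlusN N x y| := abs_mul _ _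
    _ ≤ (N x * N y) * (N x * N y) :=
        mul_le_mul hminus hplus (abs_nonneg _) (mul_nonneg (h.nonneg x) (h.nonneg y))
    _ = N x ^ 2 * N y ^ 2 := by ring

lemma tendsto_normSqDiffQuot_self (h : IsNorm N) (x : X) :
    Tendsto (normSqDiffQuot N x x) (𝓝[≠] 0) (𝓝 (N x ^ 2)) := by
  have hcont : Tendsto (fun t : ℝ => N x ^ 2 * (1 + t / 2)) (𝓝[≠] 0) (𝓝 (N x ^ 2)) := by
    have : Continuous fun t : ℝ => N x ^ 2 * (1 + t / 2) := by fun_prop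
    simpa using (this.tendsto 0).mono_left nhdsWithin_le_nhds
  refine hcont.congr' ?_
  filter_upwards [self_mem_nhdsWithin, nhdsWithin_le_nhds (Ioi_mem_nhds neg_one_lt_zero)]
    with t (ht : t ≠ 0) (ht' : -1 < t)
  rw [normSqDiffQuot, show x + t • x = (1 + t) • x by module, h.2.1, abs_of_pos (by linarith)]
  field_simp
  ring

lemma rhoStarN_self (h : IsNorm N) (x : X) : rhoStarN N x x = N x ^ 4 := by
  have hminus : rhoMinusN N x x = N x ^ 2 :=
    ((h.tendsto_normSqDiffQuot_self x).mono_left (nhdsLT_le_nhdsNE 0)).limUnder_eq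
  have hplus : rhoPlusN N x x = N x ^ 2 :=
    ((h.tendsto_normSqDiffQuot_self x).mono_left (nhdsGT_le_nhdsNE 0)).limUnder_eq
  rw [rhoStarN, hminus, hplus]
  ring

end IsNorm

lemma add_le_one_add_add_mul_min {a b c d : ℝ} (ha : 0 ≤ a) (hb : 0 ≤ b) (hc : 0 ≤ c)
    (hd : 0 ≤ d) (hba : b ≤ c * a) (hab : a ≤ d * b) : a + b ≤ (1 + (c + d)) * min a b := by
  rcases le_total a b with h | h
  · rw [min_eq_left h]; nlinarith
  · rw [min_eq_right h]; nlinarith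

lemma sq_mul_sq_le_of_le_mul {a b c d M : ℝ} (ha : 0 ≤ a) (hc : 0 ≤ c) (hab : a ≤ M * b)
    (hcd : c ≤ M * d) : a ^ 2 * c ^ 2 ≤ M ^ 4 * (b ^ 2 * d ^ 2) :=
  calc a ^ 2 * c ^ 2 = (a * c) ^ 2 := by ring
    _ ≤ (M * b * (M * d)) ^ 2 :=
        pow_le_pow_left₀ (mul_nonneg ha hc) (mul_le_mul hab hcd hc (ha.trans hab)) 2
    _ = M ^ 4 * (b ^ 2 * d ^ 2) := by ring

lemma le_one_add_mul_of_abs_pow_four_sub_le {a b α : ℝ} (ha : 0 ≤ a) (hb : 0 ≤ b) (hα : 0 ≤ α)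
    (h : |b ^ 4 - a ^ 4| ≤ α * a ^ 4) : b ≤ (1 + α) * a := by
  have h1α : 1 ≤ 1 + α := by linarith
  refine (pow_le_pow_iff_left₀ hb (by positivity) four_ne_zero).mp ?_
  calc b ^ 4 ≤ (1 + α) * a ^ 4 := by linarith [(abs_le.mp h).2]
    _ ≤ (1 + α) ^ 4 * a ^ 4 := by gcongr; exact le_self_pow₀ h1α four_ne_zero
    _ = ((1 + α) * a) ^ 4 := (mul_pow _ _ _).symm

theorem equivalent_norms_iff_rhoStar_close_general {X : Type*} [AddCommGroup X] [Module ℝ X]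
    (N₁ N₂ : X → ℝ) (h₁ : IsNorm N₁) (h₂ : IsNorm N₂) :
    (∃ m M : ℝ, 0 < m ∧ m ≤ M ∧ ∀ x : X, m * N₁ x ≤ N₂ x ∧ N₂ x ≤ M * N₁ x) ↔
    (∃ α : ℝ, 0 < α ∧ ∀ x y : X,
      |rhoStarN N₁ x y - rhoStarN N₂ x y| ≤
        α * min (N₁ x ^ 2 * N₁ y ^ 2) (N₂ x ^ 2 * N₂ y ^ 2)) := by
  constructor
  · rintro ⟨m, M, hm, hmM, hequiv⟩
    have hN₂ (x : X) : N₂ x ≤ M * N₁ x := (hequiv x).2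
    have hN₁ (x : X) : N₁ x ≤ m⁻¹ * N₂ x := by
      rw [inv_mul_eq_div, le_div_iff₀ hm, mul_comm]
      exact (hequiv x).1
    refine ⟨1 + (M ^ 4 + m⁻¹ ^ 4), by positivity, fun x y => ?_⟩
    calc |rhoStarN N₁ x y - rhoStarN N₂ x y|
        ≤ |rhoStarN N₁ x y| + |rhoStarN N₂ x y| := abs_sub _ _
      _ ≤ N₁ x ^ 2 * N₁ y ^ 2 + N₂ x ^ 2 * N₂ y ^ 2 :=
          add_le_add (h₁.abs_rhoStarN_le x y) (h₂.abs_rhoStarN_le x y)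
      _ ≤ _ := add_le_one_add_add_mul_min (by positivity) (by positivity) (by positivity)
          (by positivity) (sq_mul_sq_le_of_le_mul (h₂.nonneg x) (h₂.nonneg y) (hN₂ x) (hN₂ y))
          (sq_mul_sq_le_of_le_mul (h₁.nonneg x) (h₁.nonneg y) (hN₁ x) (hN₁ y))
  · rintro ⟨α, hα, hclose⟩
    have hcomp (x : X) : N₂ x ≤ (1 + α) * N₁ x ∧ N₁ x ≤ (1 + α) * N₂ x := by
      have hx : |N₁ x ^ 4 - N₂ x ^ 4| ≤ α * min (N₁ x ^ 4) (N₂ x ^ 4) := by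
        simpa only [h₁.rhoStarN_self, h₂.rhoStarN_self, ← pow_add] using hclose x x
      constructor
      · refine le_one_add_mul_of_abs_pow_four_sub_le (h₁.nonneg x) (h₂.nonneg x) hα.le ?_
        rw [abs_sub_comm]
        exact hx.trans (mul_le_mul_of_nonneg_left (min_le_left _ _) hα.le)
      · exact le_one_add_mul_of_abs_pow_four_sub_le (h₂.nonneg x) (h₁.nonneg x) hα.le
          (hx.trans (mul_le_mul_of_nonneg_left (min_le_right _ _) hα.le))
    have h1α : 1 ≤ 1 + α := by linarith
    refine ⟨(1 + α)⁻¹, 1 + α, by positivity, (inv_le_one_of_one_le₀ h1α).trans h1α,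
      fun x => ⟨?_, (hcomp x).1⟩⟩
    rw [inv_mul_le_iff₀ (by positivity)]
    exact (hcomp x).2

theorem equivalent_norms_iff_rhoStar_close {X : Type*} [AddCommGroup X] [Module ℝ X]
    (hdim : 2 ≤ Module.rank ℝ X) (N₁ N₂ : X → ℝ) (h₁ : IsNorm N₁) (h₂ : IsNorm N₂) :
    (∃ m M : ℝ, 0 < m ∧ m ≤ M ∧ ∀ x : X, m * N₁ x ≤ N₂ x ∧ N₂ x ≤ M * N₁ x) ↔
    (∃ α : ℝ, 0 < α ∧ ∀ x y : X,
      |rhoStarN N₁ x y - rhoStarN N₂ x y| ≤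
        α * min (N₁ x ^ 2 * N₁ y ^ 2) (N₂ x ^ 2 * N₂ y ^ 2)) :=
  equivalent_norms_iff_rhoStar_close_general N₁ N₂ h₁ h₂
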